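/- Over F_2, define for each p-simplex σ ∈ X(Z_2^n) the chain [σ] = Σ_{σ' ~ σ} σ' in the simplicial p-chain group, and for σ = {α_1,...,α_{p+1}} with p ≥ 1 define d_p^D([σ]) = [(σ \ {α_1}) + α_1] + Σ_{i=1}^{p+1} [σ \ {α_i}]. Then d_p^D([σ]) is independent of the choice of the element α_1 ∈ σ and of the representative σ of its equivalence class; hence d_p^D is well-defined. -/

import Mathlib

open Finset

attribute [local instance] Classical.propDecidable

abbrev V (n : ℕ) : Type := Fin n → ZMod 2

def LinIndep {n : ℕ} (s : Finset (V n)) : Prop :=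
  LinearIndependent (ZMod 2) (fun x : (s : Set (V n)) => (x : V n))

def IsSimplex (n p : ℕ) (σ : Finset (V n)) : Prop :=
  σ.card = p + 1 ∧ LinIndep σ

def shift {n : ℕ} (σ : Finset (V n)) (α : V n) : Finset (V n) :=
  σ.image (· + α)

def SimpRel {n : ℕ} (σ σ' : Finset (V n)) : Prop :=
  σ = σ' ∨ ∃ α : V n, σ ∩ σ' = {α} ∧ shift (σ \ {α}) α = σ' \ {α}

/-- The class sum `[σ] = ∑_{σ' ~ σ} σ'`, a simplicial chain over `F_2`. -/
noncomputable def classSum {n : ℕ} (σ : Finset (V n)) : Finset (V n) →₀ ZMod 2 :=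
  ∑ σ' ∈ Finset.univ.filter (fun σ' => SimpRel σ σ'), Finsupp.single σ' 1

/-- The value `d_p^D([σ])` computed using the chosen element `α ∈ σ`:
`[(σ \ {α}) + α] + ∑_{β ∈ σ} [σ \ {β}]`. -/
noncomputable def dDat {n : ℕ} (σ : Finset (V n)) (α : V n) : Finset (V n) →₀ ZMod 2 :=
  classSum (shift (σ \ {α}) α) + ∑ β ∈ σ, classSum (σ \ {β})

/-!
For an independent `σ`, the simplices equivalent to `σ` are `σ` itself and the pivots
`σ_α = {α} ∪ ((σ \ {α}) + α)`, `α ∈ σ`; a pivot spans the same space as `σ` and has as many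
elements, so it is again independent. Pivoting `σ_α` at `α` gives back `σ` and at `s + α` gives
`σ_s`, so `σ` and `σ_α` have the same class and the same class sum `[·]`.

Changing the chosen element from `α` to `α'` replaces `(σ \ {α}) + α` by its pivot at `α + α'`,
which does not change its class sum. Computing `d^D` on `σ_γ` with the element `γ`, the faces of
`σ_γ` are `(σ \ {γ}) + γ` and the pivots at `γ` of the faces `σ \ {s}`, `s ≠ γ`, while the extra
term becomes `[σ \ {γ}]`: the same classes as for `σ`.
-/

open Submodule (span)

section

variable {n : ℕ}

@[simp] lemma V.add_self (x : V n) : x + x = 0 := by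
  funext i; exact CharTwo.add_self_eq_zero _

@[simp] lemma V.add_add_cancel_right (x a : V n) : x + a + a = x := by
  rw [add_assoc, V.add_self, add_zero]

lemma mem_shift {s : Finset (V n)} {α x : V n} : x ∈ shift s α ↔ x + α ∈ s := by
  simp only [shift, mem_image]
  exact ⟨by rintro ⟨y, hy, rfl⟩; simpa, fun h => ⟨x + α, h, by simp⟩⟩

@[simp] lemma shift_shift_self (s : Finset (V n)) (α : V n) : shift (shift s α) α = s := by
  ext x; simp [mem_shift]

lemma shift_shift (s : Finset (V n)) (α β : V n) : shift (shift s α) β = shift s (α + β) := by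
  ext x; simp only [mem_shift, add_assoc, add_comm β]

lemma shift_sdiff (s t : Finset (V n)) (α : V n) :
    shift (s \ t) α = shift s α \ shift t α :=
  image_sdiff _ _ (add_left_injective α)

@[simp] lemma shift_singleton (a α : V n) : shift {a} α = {a + α} := by
  simp [shift]

lemma shift_insert (a : V n) (s : Finset (V n)) (α : V n) :
    shift (insert a s) α = insert (a + α) (shift s α) := by
  simp [shift, image_insert]

lemma card_shift (s : Finset (V n)) (α : V n) : (shift s α).card = s.card :=
  card_image_of_injective _ (add_left_injective α)

lemma sum_shift {M : Type*} [AddCommMonoid M] (s : Finset (V n)) (α : V n) (f : V n → M) :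
    ∑ x ∈ shift s α, f x = ∑ x ∈ s, f (x + α) :=
  sum_image fun _ _ _ _ h => add_left_injective α h

def pivot (σ : Finset (V n)) (α : V n) : Finset (V n) :=
  insert α (shift (σ \ {α}) α)

variable {σ : Finset (V n)} {α : V n}

lemma mem_pivot_self (σ : Finset (V n)) (α : V n) : α ∈ pivot σ α :=
  mem_insert_self _ _

lemma add_mem_pivot {s : V n} (hs : s ∈ σ) (hsα : s ≠ α) : s + α ∈ pivot σ α :=
  mem_insert_of_mem (mem_shift.2 (by simpa using ⟨hs, hsα⟩))

lemma mem_pivot {x : V n} : x ∈ pivot σ α ↔ x = α ∨ ∃ s ∈ σ, s ≠ α ∧ x = s + α := by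
  simp only [pivot, mem_insert, mem_shift, mem_sdiff, mem_singleton]
  refine or_congr_right ⟨fun h => ⟨x + α, h.1, h.2, by simp⟩, ?_⟩
  rintro ⟨s, hs, hsα, rfl⟩
  simpa using ⟨hs, hsα⟩

lemma self_notMem_shift_sdiff (h0 : (0 : V n) ∉ σ) : α ∉ shift (σ \ {α}) α := by
  simpa [mem_shift] using fun h => absurd h h0

lemma pivot_sdiff_self (h0 : (0 : V n) ∉ σ) : pivot σ α \ {α} = shift (σ \ {α}) α := by
  rw [pivot, ← erase_eq, erase_insert (self_notMem_shift_sdiff h0)]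

lemma sum_pivot {M : Type*} [AddCommMonoid M] (h0 : (0 : V n) ∉ σ) (f : V n → M) :
    ∑ x ∈ pivot σ α, f x = f α + ∑ s ∈ σ \ {α}, f (s + α) := by
  rw [pivot, sum_insert (self_notMem_shift_sdiff h0), sum_shift]

lemma card_pivot (h0 : (0 : V n) ∉ σ) (hα : α ∈ σ) : (pivot σ α).card = σ.card := by
  rw [pivot, card_insert_of_notMem (self_notMem_shift_sdiff h0), card_shift, ← erase_eq,
    card_erase_add_one hα]

lemma pivot_pivot_self (h0 : (0 : V n) ∉ σ) (hα : α ∈ σ) : pivot (pivot σ α) α = σ := by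
  rw [pivot, pivot_sdiff_self h0, shift_shift_self, ← erase_eq, insert_erase hα]

lemma pivot_sdiff_add {s : V n} (h0 : (0 : V n) ∉ σ) (hs : s ∈ σ) :
    pivot σ α \ {s + α} = pivot (σ \ {s}) α := by
  have hαs : α ∉ ({s + α} : Finset (V n)) := by
    simpa [eq_comm (a := α)] using fun h : s = 0 => h0 (h ▸ hs)
  rw [pivot, insert_sdiff_of_notMem _ hαs, pivot, sdiff_right_comm σ, shift_sdiff _ {s},
    shift_singleton]

lemma pivot_pivot {s : V n} (h0 : (0 : V n) ∉ σ) (hα : α ∈ σ) (hs : s ∈ σ) (hsα : s ≠ α) :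
    pivot (pivot σ α) (s + α) = pivot σ s := by
  have hασs : α ∈ σ \ {s} := by simpa using ⟨hα, hsα.symm⟩
  have hαsα : α + (s + α) = s := by rw [add_left_comm, V.add_self, add_zero]
  have hpivot : pivot σ s = insert s (insert (α + s) (shift ((σ \ {s}) \ {α}) s)) := by
    rw [pivot, ← shift_insert, ← erase_eq (σ \ {s}), insert_erase hασs]
  rw [hpivot, pivot, pivot_sdiff_add h0 hs, pivot, shift_insert, shift_shift, hαsα,
    insert_comm, add_comm α]

lemma span_pivot_le (hα : α ∈ σ) :
    span (ZMod 2) (pivot σ α : Set (V n)) ≤ span (ZMod 2) σ := by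
  refine Submodule.span_le.2 fun x hx => ?_
  rcases mem_pivot.1 hx with rfl | ⟨s, hs, -, rfl⟩
  · exact Submodule.subset_span hα
  · exact add_mem (Submodule.subset_span hs) (Submodule.subset_span hα)

lemma span_pivot (h0 : (0 : V n) ∉ σ) (hα : α ∈ σ) :
    span (ZMod 2) (pivot σ α : Set (V n)) = span (ZMod 2) σ := by
  refine le_antisymm (span_pivot_le hα) ?_
  simpa only [pivot_pivot_self h0 hα] using span_pivot_le (mem_pivot_self σ α)

lemma linIndep_iff_card_eq_finrank (σ : Finset (V n)) :
    LinIndep σ ↔ σ.card = Set.finrank (ZMod 2) (σ : Set (V n)) := by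
  rw [LinIndep, linearIndependent_iff_card_eq_finrank_span, Subtype.range_coe]
  simp

lemma LinIndep.zero_notMem (h : LinIndep σ) : (0 : V n) ∉ σ := by
  simpa using LinearIndepOn.zero_notMem_image (v := id) h

lemma LinIndep.mono {τ : Finset (V n)} (h : LinIndep τ) (hστ : σ ⊆ τ) : LinIndep σ :=
  LinearIndepOn.mono (v := id) h (by simpa using hστ)

lemma LinIndep.notMem_span_sdiff (h : LinIndep σ) (hα : α ∈ σ) :
    α ∉ span (ZMod 2) ((σ \ {α} : Finset (V n)) : Set (V n)) := by
  simpa using LinearIndepOn.notMem_span (v := id) h hα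

lemma linIndep_pivot (h : LinIndep σ) (hα : α ∈ σ) : LinIndep (pivot σ α) := by
  have h0 := h.zero_notMem
  rw [linIndep_iff_card_eq_finrank] at h ⊢
  rw [card_pivot h0 hα, Set.finrank, span_pivot h0 hα, h, Set.finrank]

lemma inter_pivot (h : LinIndep σ) (hα : α ∈ σ) : σ ∩ pivot σ α = {α} := by
  ext x
  simp only [mem_inter, mem_singleton]
  refine ⟨fun ⟨hxσ, hxp⟩ => ?_, by rintro rfl; exact ⟨hα, mem_pivot_self σ _⟩⟩
  rcases mem_pivot.1 hxp with hx | ⟨s, hs, hsα, rfl⟩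
  · exact hx
  by_contra hne
  have hsum : s + (s + α) = α := by rw [← add_assoc, V.add_self, zero_add]
  have hspan : s + (s + α) ∈ span (ZMod 2) ((σ \ {α} : Finset (V n)) : Set (V n)) :=
    add_mem (Submodule.subset_span (mem_sdiff.2 ⟨hs, mem_singleton.not.2 hsα⟩))
      (Submodule.subset_span (mem_sdiff.2 ⟨hxσ, mem_singleton.not.2 hne⟩))
  rw [hsum] at hspan
  exact h.notMem_span_sdiff hα hspan

lemma simpRel_iff (h : LinIndep σ) {τ : Finset (V n)} :
    SimpRel σ τ ↔ τ = σ ∨ ∃ α ∈ σ, τ = pivot σ α := by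
  constructor
  · rintro (rfl | ⟨α, hinter, hshift⟩)
    · exact Or.inl rfl
    have hα : α ∈ σ ∩ τ := hinter ▸ mem_singleton_self α
    refine Or.inr ⟨α, (mem_inter.1 hα).1, ?_⟩
    rw [pivot, hshift, ← erase_eq, insert_erase (mem_inter.1 hα).2]
  · rintro (rfl | ⟨α, hα, rfl⟩)
    · exact Or.inl rfl
    · exact Or.inr ⟨α, inter_pivot h hα, (pivot_sdiff_self h.zero_notMem).symm⟩

lemma simpRel_pivot_iff (h : LinIndep σ) (hα : α ∈ σ) {τ : Finset (V n)} :
    SimpRel (pivot σ α) τ ↔ SimpRel σ τ := by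
  have h0 := h.zero_notMem
  rw [simpRel_iff (linIndep_pivot h hα), simpRel_iff h]
  constructor
  · rintro (rfl | ⟨β, hβ, rfl⟩)
    · exact Or.inr ⟨α, hα, rfl⟩
    rcases mem_pivot.1 hβ with rfl | ⟨s, hs, hsα, rfl⟩
    · exact Or.inl (pivot_pivot_self h0 hα)
    · exact Or.inr ⟨s, hs, pivot_pivot h0 hα hs hsα⟩
  · rintro (rfl | ⟨β, hβ, rfl⟩)
    · exact Or.inr ⟨α, mem_pivot_self _ α, (pivot_pivot_self h0 hα).symm⟩
    by_cases hβα : β = α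
    · exact Or.inl (hβα ▸ rfl)
    · exact Or.inr ⟨β + α, add_mem_pivot hβ hβα, (pivot_pivot h0 hα hβ hβα).symm⟩

lemma classSum_pivot (h : LinIndep σ) (hα : α ∈ σ) : classSum (pivot σ α) = classSum σ := by
  simp only [classSum, simpRel_pivot_iff h hα]

lemma shift_sdiff_eq_pivot {α' : V n} (hα : α ∈ σ) (hαα' : α ≠ α') :
    shift (σ \ {α'}) α' = pivot (shift (σ \ {α}) α) (α + α') := by
  have hαα'α : α + (α + α') = α' := by rw [← add_assoc, V.add_self, zero_add]
  have hsingleton : ({α + α'} : Finset (V n)) = shift {α'} α := by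
    rw [shift_singleton, add_comm]
  rw [pivot, hsingleton, ← shift_sdiff, shift_shift, hαα'α, sdiff_right_comm,
    ← shift_insert, ← erase_eq (σ \ {α'}), insert_erase (by simpa using ⟨hα, hαα'⟩)]

lemma dDat_eq_of_mem {α' : V n} (h : LinIndep σ) (hα : α ∈ σ) (hα' : α' ∈ σ) :
    dDat σ α = dDat σ α' := by
  rcases eq_or_ne α α' with rfl | hαα'
  · rfl
  have hτ : LinIndep (shift (σ \ {α}) α) := (linIndep_pivot h hα).mono (subset_insert _ _)
  have hmem : α + α' ∈ shift (σ \ {α}) α := by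
    simpa [mem_shift, add_comm α α'] using ⟨hα', hαα'.symm⟩
  rw [dDat, dDat, shift_sdiff_eq_pivot hα hαα', classSum_pivot hτ hmem]

lemma dDat_pivot {γ : V n} (h : LinIndep σ) (hγ : γ ∈ σ) : dDat (pivot σ γ) γ = dDat σ γ := by
  have h0 := h.zero_notMem
  have hfaces : ∑ s ∈ σ \ {γ}, classSum (pivot σ γ \ {s + γ}) =
      ∑ s ∈ σ \ {γ}, classSum (σ \ {s}) := by
    refine sum_congr rfl fun s hs => ?_
    obtain ⟨hsσ, hsγ⟩ : s ∈ σ ∧ s ≠ γ := by simpa using hs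
    rw [pivot_sdiff_add h0 hsσ,
      classSum_pivot (h.mono sdiff_subset) (by simpa using ⟨hγ, hsγ.symm⟩)]
  rw [dDat, dDat, pivot_sdiff_self h0, shift_shift_self, sum_pivot h0, pivot_sdiff_self h0,
    hfaces, ← add_sum_erase σ _ hγ, erase_eq]
  abel

end

theorem stmt4_general (n p : ℕ) (σ σ' : Finset (V n)) (hσ : IsSimplex n p σ)
    (h : SimpRel σ σ') (α : V n) (hα : α ∈ σ) (β : V n) (hβ : β ∈ σ') :
    dDat σ α = dDat σ' β := by
  rcases (simpRel_iff hσ.2).1 h with rfl | ⟨γ, hγ, rfl⟩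
  · exact dDat_eq_of_mem hσ.2 hα hβ
  calc dDat σ α = dDat σ γ := dDat_eq_of_mem hσ.2 hα hγ
    _ = dDat (pivot σ γ) γ := (dDat_pivot hσ.2 hγ).symm
    _ = dDat (pivot σ γ) β := dDat_eq_of_mem (linIndep_pivot hσ.2 hγ) (mem_pivot_self σ γ) hβ

/-- `d_p^D([σ])` is independent of the chosen element of `σ` and of the
chosen representative of the equivalence class of `σ`; hence `d_p^D` is well defined. -/
theorem stmt4 (n p : ℕ) (hp : 1 ≤ p) (σ σ' : Finset (V n)) (hσ : IsSimplex n p σ)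
    (h : SimpRel σ σ') (α : V n) (hα : α ∈ σ) (β : V n) (hβ : β ∈ σ') :
    dDat σ α = dDat σ' β :=
  stmt4_general n p σ σ' hσ h α hα β hβ
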